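/- Let R be a ring and M a right R-module that is the direct limit of a countable directed system F₀ → F₁ → F₂ → ⋯ of finitely generated free modules. Then there is a pure short exact sequence 0 → R^(ω) → R^(ω) → M → 0; in particular, M is a pure-epimorphic image of a free module. -/

import Mathlib

universe u

/-- A monomorphism `ν : N → M` is pure if for every finitely presented module `C`,
the induced map `Hom(C, M) → Hom(C, M / ν(N))` is surjective. -/
def IsPureMono (R : Type u) [Ring R] {N M : Type u}
    [AddCommGroup N] [Module R N] [AddCommGroup M] [Module R M]
    (ν : N →ₗ[R] M) : Prop :=
  ∀ (C : Type u) [AddCommGroup C] [Module R C], Module.FinitePresentation R C →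
    ∀ h : C →ₗ[R] M ⧸ LinearMap.range ν,
      ∃ g : C →ₗ[R] M, (LinearMap.range ν).mkQ ∘ₗ g = h

/-- Iterated composite of the transition maps of a directed system over `ℕ`. -/
def iterMap (R : Type u) [Ring R] (F : ℕ → Type u)
    [∀ n, AddCommGroup (F n)] [∀ n, Module R (F n)]
    (t : ∀ n, F n →ₗ[R] F (n + 1)) : ∀ (n k : ℕ), F n →ₗ[R] F (n + k)
  | _, 0 => LinearMap.id
  | n, (k + 1) => (t (n + k)) ∘ₗ iterMap R F t n k

/-!
The telescope map `1 - shift` on `⨁ₙ Fₙ` is injective, and its cokernel is the direct limit `M`.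
Purity comes from the compactness of finitely presented modules: a map `C → M` from a finitely
presented `C` factors through some `Fₙ`, and `Fₙ` sits inside `⨁ₙ Fₙ` over `M`, so every such map
lifts to the middle term. Adjoining a summand `R` with zero transition maps to each `Fₙ` does not
change the limit, and makes `⨁ₙ Fₙ` free on a countably infinite basis, i.e. `R^(ω)`.
-/

open Function

theorem isPureMono_of_forall_exists_lift {R : Type u} [Ring R] {N B M : Type u}
    [AddCommGroup N] [Module R N] [AddCommGroup B] [Module R B] [AddCommGroup M] [Module R M]
    {f : N →ₗ[R] B} {g : B →ₗ[R] M} (hfg : Exact f g)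
    (hlift : ∀ (C : Type u) [AddCommGroup C] [Module R C], Module.FinitePresentation R C →
      ∀ h : C →ₗ[R] M, ∃ l : C →ₗ[R] B, g ∘ₗ l = h) :
    IsPureMono R f := by
  intro C _ _ hC h
  obtain ⟨l, hl⟩ := hlift C hC ((LinearMap.range f).liftQ g (hfg · |>.mpr) ∘ₗ h)
  refine ⟨l, LinearMap.ext fun c => LinearMap.injective_range_liftQ_of_exact hfg ?_⟩
  exact LinearMap.congr_fun hl c

section DirectSystem

variable {R : Type u} [Ring R] {F : ℕ → Type u} [∀ n, AddCommGroup (F n)] [∀ n, Module R (F n)]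
  {t : ∀ n, F n →ₗ[R] F (n + 1)}

theorem iterMap_succ_apply (n k : ℕ) (x : F n) :
    iterMap R F t n (k + 1) x = t (n + k) (iterMap R F t n k x) := rfl

theorem iterMap_eq_zero_of_le {n k k' : ℕ} {x : F n} (h : iterMap R F t n k x = 0)
    (hk : k ≤ k') : iterMap R F t n k' x = 0 := by
  induction k', hk using Nat.le_induction with
  | base => exact h
  | succ k' _ ih => rw [iterMap_succ_apply, ih, map_zero]

variable {M : Type u} [AddCommGroup M] [Module R M] {v : ∀ n, F n →ₗ[R] M}

theorem apply_iterMap (hcompat : ∀ n, v (n + 1) ∘ₗ t n = v n) (n k : ℕ) (x : F n) :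
    v (n + k) (iterMap R F t n k x) = v n x := by
  induction k with
  | zero => rfl
  | succ k ih => exact (LinearMap.congr_fun (hcompat (n + k)) _).trans ih

theorem exists_apply_eq_of_le (hcompat : ∀ n, v (n + 1) ∘ₗ t n = v n) {n n' : ℕ} (h : n ≤ n')
    (x : F n) : ∃ y : F n', v n' y = v n x := by
  obtain ⟨k, rfl⟩ := Nat.exists_eq_add_of_le h
  exact ⟨_, apply_iterMap hcompat n k x⟩

theorem exists_forall_apply_eq {ι : Type*} [Finite ι] (hcompat : ∀ n, v (n + 1) ∘ₗ t n = v n)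
    (hsurj : ∀ m : M, ∃ n x, v n x = m) (m : ι → M) :
    ∃ n, ∃ x : ι → F n, ∀ i, v n (x i) = m i := by
  choose n₀ x₀ hx₀ using fun i => hsurj (m i)
  obtain ⟨n, hn⟩ := Finite.exists_le n₀
  choose x hx using fun i => exists_apply_eq_of_le hcompat (hn i) (x₀ i)
  exact ⟨n, x, fun i => (hx i).trans (hx₀ i)⟩

theorem exists_forall_iterMap_eq_zero {ι : Type*} [Finite ι]
    (hker : ∀ n x, v n x = 0 → ∃ k, iterMap R F t n k x = 0) {n : ℕ} (x : ι → F n)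
    (hx : ∀ i, v n (x i) = 0) : ∃ k, ∀ i, iterMap R F t n k (x i) = 0 := by
  choose k₀ hk₀ using fun i => hker n (x i) (hx i)
  obtain ⟨k, hk⟩ := Finite.exists_le k₀
  exact ⟨k, fun i => iterMap_eq_zero_of_le (hk₀ i) (hk i)⟩

theorem exists_comp_eq_of_finitePresentation (hcompat : ∀ n, v (n + 1) ∘ₗ t n = v n)
    (hsurj : ∀ m : M, ∃ n x, v n x = m) (hker : ∀ n x, v n x = 0 → ∃ k, iterMap R F t n k x = 0)
    {C : Type*} [AddCommGroup C] [Module R C] [Module.FinitePresentation R C] (h : C →ₗ[R] M) :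
    ∃ n, ∃ ψ : C →ₗ[R] F n, v n ∘ₗ ψ = h := by
  classical
  -- Lift the generators of `C` to some `F n`, then move far enough along the system that the
  -- finitely many relations vanish.
  obtain ⟨a, b, p, q, hp, hqp⟩ := Module.FinitePresentation.exists_fin' R C
  obtain ⟨n, x, hx⟩ := exists_forall_apply_eq hcompat hsurj fun i => h (p (Pi.single i 1))
  let φ := Fintype.linearCombination R x
  have hφ : v n ∘ₗ φ = h ∘ₗ p := by
    refine LinearMap.pi_ext' fun i => LinearMap.ext_ring ?_
    simpa [φ] using hx i
  obtain ⟨k, hk⟩ := exists_forall_iterMap_eq_zero hker (fun j => φ (q (Pi.single j 1))) fun j => by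
    simpa [hqp.apply_apply_eq_zero] using congr($hφ (q (Pi.single j 1)))
  have hψ₀ : LinearMap.range q ≤ LinearMap.ker (iterMap R F t n k ∘ₗ φ) :=
    LinearMap.range_le_ker_iff.mpr <| LinearMap.pi_ext' fun j => LinearMap.ext_ring <| by
      simpa using hk j
  refine ⟨n + k, (LinearMap.range q).liftQ _ hψ₀ ∘ₗ (hqp.linearEquivOfSurjective hp).symm, ?_⟩
  refine (LinearMap.cancel_right hp).mp <| LinearMap.ext fun y => ?_
  simpa [apply_iterMap hcompat] using congr($hφ y)

variable (t) in
noncomputable def telescopeShift : (Π₀ n, F n) →ₗ[R] Π₀ n, F n :=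
  DFinsupp.lsum ℕ fun n => DFinsupp.lsingle (n + 1) ∘ₗ t n

variable (t) in
noncomputable def telescope : (Π₀ n, F n) →ₗ[R] Π₀ n, F n :=
  LinearMap.id - telescopeShift t

theorem telescopeShift_single (n : ℕ) (x : F n) :
    telescopeShift t (DFinsupp.single n x) = DFinsupp.single (n + 1) (t n x) :=
  DFinsupp.lsum_single _ _ _ _

theorem telescope_single (n : ℕ) (x : F n) :
    telescope t (DFinsupp.single n x) = DFinsupp.single n x - DFinsupp.single (n + 1) (t n x) := by
  simp [telescope, telescopeShift_single]

theorem telescopeShift_apply_zero (x : Π₀ n, F n) : telescopeShift t x 0 = 0 := by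
  induction x using DFinsupp.induction with
  | h0 => simp
  | ha n y x _ _ ih => simp [telescopeShift_single, ih]

theorem telescopeShift_apply_succ (x : Π₀ n, F n) (m : ℕ) :
    telescopeShift t x (m + 1) = t m (x m) := by
  induction x using DFinsupp.induction with
  | h0 => simp
  | ha n y x _ _ ih =>
    obtain rfl | hnm := eq_or_ne n m
    · simp [telescopeShift_single, ih]
    · simp [telescopeShift_single, ih, hnm]

theorem telescope_injective : Injective (telescope t) := by
  refine (injective_iff_map_eq_zero _).mpr fun x hx => ?_
  have hfix : telescopeShift t x = x := (sub_eq_zero.mp hx).symm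
  ext m
  induction m with
  | zero => rw [← hfix, telescopeShift_apply_zero]; rfl
  | succ m ih => rw [← hfix, telescopeShift_apply_succ, ih, DFinsupp.zero_apply, map_zero]; rfl

theorem single_sub_single_iterMap_mem_range_telescope (n k : ℕ) (x : F n) :
    DFinsupp.single n x - DFinsupp.single (n + k) (iterMap R F t n k x) ∈
      LinearMap.range (telescope t) := by
  induction k with
  | zero => simp [iterMap]
  | succ k ih =>
    have step := add_mem ih <|
      LinearMap.mem_range_self (telescope t) (DFinsupp.single (n + k) (iterMap R F t n k x))
    rw [telescope_single, sub_add_sub_cancel] at step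
    exact step

theorem exists_single_sub_single_mem_range_telescope {n n' : ℕ} (h : n ≤ n') (x : F n) :
    ∃ y : F n', DFinsupp.single n x - DFinsupp.single n' y ∈ LinearMap.range (telescope t) := by
  obtain ⟨k, rfl⟩ := Nat.exists_eq_add_of_le h
  exact ⟨_, single_sub_single_iterMap_mem_range_telescope n k x⟩

theorem exists_sub_single_mem_range_telescope (x : Π₀ n, F n) :
    ∃ n, ∃ y : F n, x - DFinsupp.single n y ∈ LinearMap.range (telescope t) := by
  induction x using DFinsupp.induction with
  | h0 => exact ⟨0, 0, by simp⟩
  | ha i z x _ _ ih =>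
    obtain ⟨n, y, hy⟩ := ih
    obtain ⟨z', hz'⟩ := exists_single_sub_single_mem_range_telescope (t := t) (le_max_left i n) z
    obtain ⟨y', hy'⟩ := exists_single_sub_single_mem_range_telescope (t := t) (le_max_right i n) y
    refine ⟨max i n, z' + y', ?_⟩
    convert add_mem hz' (add_mem hy hy') using 1
    rw [DFinsupp.single_add]
    abel

theorem lsum_comp_telescope (hcompat : ∀ n, v (n + 1) ∘ₗ t n = v n) :
    DFinsupp.lsum ℕ v ∘ₗ telescope t = 0 := by
  refine DFinsupp.lhom_ext' fun n => LinearMap.ext fun x => ?_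
  simpa [telescope_single, sub_eq_zero] using (LinearMap.congr_fun (hcompat n) x).symm

theorem exact_telescope_lsum (hcompat : ∀ n, v (n + 1) ∘ₗ t n = v n)
    (hker : ∀ n x, v n x = 0 → ∃ k, iterMap R F t n k x = 0) :
    Exact (telescope t) (DFinsupp.lsum ℕ v) := by
  refine LinearMap.exact_iff.mpr <| le_antisymm (fun x hx => ?_) <|
    LinearMap.range_le_ker_iff.mpr (lsum_comp_telescope hcompat)
  obtain ⟨n, y, hy⟩ := exists_sub_single_mem_range_telescope (t := t) x
  have hvy : v n y = 0 := by
    have := LinearMap.range_le_ker_iff.mpr (lsum_comp_telescope hcompat) hy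
    rwa [LinearMap.mem_ker, map_sub, LinearMap.mem_ker.mp hx, DFinsupp.lsum_single, zero_sub,
      neg_eq_zero] at this
  obtain ⟨k, hk⟩ := hker n y hvy
  have hsingle := single_sub_single_iterMap_mem_range_telescope (t := t) n k y
  rw [hk, DFinsupp.single_zero, sub_zero] at hsingle
  simpa using add_mem hy hsingle

end DirectSystem

section Padding

variable {R : Type u} [Ring R] {F : ℕ → Type u} [∀ n, AddCommGroup (F n)] [∀ n, Module R (F n)]
  {t : ∀ n, F n →ₗ[R] F (n + 1)}

theorem iterMap_prodMap_zero_succ (n k : ℕ) (z : F n × R) :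
    iterMap R (fun n => F n × R) (fun n => (t n).prodMap (0 : R →ₗ[R] R)) n (k + 1) z =
      (iterMap R F t n (k + 1) z.1, 0) := by
  induction k with
  | zero => rfl
  | succ k ih => rw [iterMap_succ_apply, ih]; rfl

theorem exact_telescope_prodMap_zero {M : Type u} [AddCommGroup M] [Module R M]
    {v : ∀ n, F n →ₗ[R] M} (hcompat : ∀ n, v (n + 1) ∘ₗ t n = v n)
    (hker : ∀ n x, v n x = 0 → ∃ k, iterMap R F t n k x = 0) :
    Exact (telescope fun n => (t n).prodMap (0 : R →ₗ[R] R))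
      (DFinsupp.lsum ℕ fun n => v n ∘ₗ LinearMap.fst R (F n) R) := by
  refine exact_telescope_lsum (fun n => LinearMap.ext fun z => LinearMap.congr_fun (hcompat n) z.1)
    fun n z hz => ?_
  obtain ⟨k, hk⟩ := hker n z.1 hz
  refine ⟨k + 1, ?_⟩
  rw [iterMap_prodMap_zero_succ, iterMap_succ_apply, hk, map_zero, Prod.mk_zero_zero]

theorem nonempty_dfinsupp_prod_linearEquiv_finsupp [∀ n, Module.Free R (F n)]
    [∀ n, Module.Finite R (F n)] : Nonempty ((Π₀ n, F n × R) ≃ₗ[R] (ℕ →₀ R)) := by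
  let ι n := Module.Free.ChooseBasisIndex R (F n) ⊕ Unit
  let b : Module.Basis (Σ n, ι n) R (Π₀ n, F n × R) := DFinsupp.basis fun n =>
    (Module.Free.chooseBasis R (F n)).prod (Module.Basis.singleton Unit R)
  have : Infinite (Σ n, ι n) := Infinite.of_injective (fun n => ⟨n, Sum.inr ()⟩)
    fun _ _ h => congrArg Sigma.fst h
  obtain ⟨σ⟩ : Nonempty ((Σ n, ι n) ≃ ℕ) := nonempty_equiv_of_countable
  exact ⟨(b.reindex σ).repr⟩

end Padding

/-- If `M` is the direct limit of a countable directed system `F₀ → F₁ → ⋯` of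
finitely generated free modules, then there is a pure short exact sequence
`0 → R^(ω) → R^(ω) → M → 0`; in particular `M` is a pure-epimorphic image of a
free module. -/
theorem telescope_pure_exact (R : Type u) [Ring R] (F : ℕ → Type u)
    [∀ n, AddCommGroup (F n)] [∀ n, Module R (F n)]
    (hfree : ∀ n, Module.Free R (F n)) (hfg : ∀ n, Module.Finite R (F n))
    (t : ∀ n, F n →ₗ[R] F (n + 1))
    (M : Type u) [AddCommGroup M] [Module R M]
    (v : ∀ n, F n →ₗ[R] M)
    (hcompat : ∀ n, v (n + 1) ∘ₗ t n = v n)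
    (hsurj : ∀ m : M, ∃ n x, v n x = m)
    (hker : ∀ n x, v n x = 0 → ∃ k, iterMap R F t n k x = 0) :
    ∃ (f : (ℕ →₀ R) →ₗ[R] (ℕ →₀ R)) (g : (ℕ →₀ R) →ₗ[R] M),
      Function.Injective f ∧ Function.Surjective g ∧
        LinearMap.range f = LinearMap.ker g ∧ IsPureMono R f := by
  obtain ⟨e⟩ := nonempty_dfinsupp_prod_linearEquiv_finsupp (R := R) (F := F)
  let f₀ := telescope fun n => (t n).prodMap (0 : R →ₗ[R] R)
  let g₀ := DFinsupp.lsum ℕ fun n => v n ∘ₗ LinearMap.fst R (F n) R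
  have hexact : Exact (e.toLinearMap ∘ₗ f₀ ∘ₗ e.symm.toLinearMap) (g₀ ∘ₗ e.symm.toLinearMap) :=
    (e.conj_exact_iff_exact _ _).mpr <| (LinearEquiv.precomp_exact_iff_exact (e := e.symm)).mpr <|
      exact_telescope_prodMap_zero hcompat hker
  have hlift (C : Type u) [AddCommGroup C] [Module R C] (hC : Module.FinitePresentation R C)
      (h : C →ₗ[R] M) : ∃ l : C →ₗ[R] ℕ →₀ R, (g₀ ∘ₗ e.symm) ∘ₗ l = h := by
    obtain ⟨n, ψ, hψ⟩ := exists_comp_eq_of_finitePresentation hcompat hsurj hker h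
    refine ⟨e.toLinearMap ∘ₗ DFinsupp.lsingle (M := fun n => F n × R) n ∘ₗ
      LinearMap.inl R (F n) R ∘ₗ ψ, ?_⟩
    ext
    simp [g₀, ← hψ]
  refine ⟨_, _, e.injective.comp (telescope_injective.comp e.symm.injective), fun m => ?_,
    hexact.linearMap_ker_eq.symm, isPureMono_of_forall_exists_lift hexact hlift⟩
  obtain ⟨n, x, rfl⟩ := hsurj m
  exact ⟨e (DFinsupp.single n (x, 0)), by simp [g₀]⟩
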